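/- In the CVP-reduction construction (W₁, b₁ as above with parameter α), if z ∈ {0,1}^{2n} satisfies ‖W₁ z + b₁‖_p < δ and α > δ > 0, then for every index i ∈ [n], exactly one of z_{2i-1}, z_{2i} equals 1; consequently, setting y_i = z_{2i-1} gives y ∈ {0,1}^n with ‖B y - t‖_p < δ. -/

import Mathlib

/-!
Each bottom coordinate of the residual `W₁ z + b₁` equals `α (z_{2i-1} + z_{2i} - 1)`, which for
binary `z` is `0` or `±α`. A single coordinate is bounded by the `ℓ_p` norm, which is `< δ < α`,
so that coordinate vanishes. The top coordinates are exactly `B y - t`, and discarding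
coordinates does not increase the `ℓ_p` norm.
-/

open Matrix

section LpSum

variable {ι κ : Type*} [Fintype ι] [Fintype κ]

theorem abs_le_rpow_sum_rpow (x : ι → ℝ) {p : ℝ} (hp : 0 < p) (i : ι) :
    |x i| ≤ (∑ j, |x j| ^ p) ^ (1 / p) :=
  calc |x i| = (|x i| ^ p) ^ (1 / p) := by
        rw [← Real.rpow_mul (abs_nonneg _), mul_one_div_cancel hp.ne', Real.rpow_one]
    _ ≤ (∑ j, |x j| ^ p) ^ (1 / p) := by
        gcongr
        exact Finset.single_le_sum (f := fun j => |x j| ^ p) (fun j _ => by positivity)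
          (Finset.mem_univ i)

theorem rpow_sum_inl_le (x : ι ⊕ κ → ℝ) {p : ℝ} (hp : 0 ≤ p) :
    (∑ j, |x (Sum.inl j)| ^ p) ^ (1 / p) ≤ (∑ r, |x r| ^ p) ^ (1 / p) := by
  rw [Fintype.sum_sum_type]
  gcongr
  exact le_add_of_nonneg_right (Finset.sum_nonneg fun _ _ => by positivity)

end LpSum

section CvpReduction

variable {m n : Type*} [DecidableEq n]

def cvpMatrix (B : Matrix m n ℝ) (α : ℝ) : Matrix (m ⊕ n) (n × Fin 2) ℝ :=
  fromRows (of fun j c => if c.2 = 0 then B j c.1 else 0) (of fun i c => if i = c.1 then α else 0)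

def cvpShift (t : m → ℝ) (α : ℝ) : m ⊕ n → ℝ :=
  Sum.elim (fun j => -t j) (fun _ => -α)

variable [Fintype n] (B : Matrix m n ℝ) (t : m → ℝ) (α : ℝ) (z : n × Fin 2 → ℝ)

theorem cvpResidual_inl (j : m) :
    (cvpMatrix B α *ᵥ z + cvpShift t α : m ⊕ n → ℝ) (Sum.inl j) = (B *ᵥ fun i => z (i, 0)) j - t j := by
  simp [cvpMatrix, cvpShift, mulVec, dotProduct, Fintype.sum_prod_type, sub_eq_add_neg]

theorem cvpResidual_inr (i : n) :
    (cvpMatrix B α *ᵥ z + cvpShift t α : m ⊕ n → ℝ) (Sum.inr i) = α * (z (i, 0) + z (i, 1)) - α := by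
  simp [cvpMatrix, cvpShift, mulVec, dotProduct, Fintype.sum_prod_type, ite_add_ite, mul_add,
    sub_eq_add_neg]

end CvpReduction

theorem exactly_one_of_abs_sub_lt {α a b : ℝ} (ha : a = 0 ∨ a = 1) (hb : b = 0 ∨ b = 1)
    (h : |α * (a + b) - α| < α) : (a = 1 ∧ b = 0) ∨ (a = 0 ∧ b = 1) := by
  obtain ⟨h₁, h₂⟩ := abs_lt.mp h
  rcases ha with rfl | rfl <;> rcases hb with rfl | rfl
  · norm_num at h₁
  · simp
  · simp
  · linarith

theorem stmt_10 (d n : ℕ) (B : Matrix (Fin d) (Fin n) ℝ) (t : Fin d → ℝ)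
    (α δ p : ℝ) (hαδ : δ < α) (hp : 1 ≤ p)
    (W₁ : Matrix (Fin d ⊕ Fin n) (Fin n × Fin 2) ℝ)
    (hW : W₁ = fun r c =>
      match r with
      | Sum.inl j => if c.2 = 0 then B j c.1 else 0
      | Sum.inr i => if i = c.1 then α else 0)
    (b₁ : Fin d ⊕ Fin n → ℝ)
    (hb : b₁ = Sum.elim (fun j => -t j) (fun _ => -α))
    (z : Fin n × Fin 2 → ℝ) (hz : ∀ c, z c = 0 ∨ z c = 1)
    (h : (∑ r, |(W₁.mulVec z + b₁) r| ^ p) ^ (1/p) < δ) :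
    (∀ i : Fin n, (z (i, 0) = 1 ∧ z (i, 1) = 0) ∨ (z (i, 0) = 0 ∧ z (i, 1) = 1)) ∧
      (∑ j, |B.mulVec (fun i => z (i, 0)) j - t j| ^ p) ^ (1/p) < δ := by
  replace hW : W₁ = cvpMatrix B α := by rw [hW]; ext (j | i) c <;> rfl
  replace hb : b₁ = cvpShift t α := hb
  subst hW hb
  have hp₀ : 0 < p := zero_lt_one.trans_le hp
  constructor
  · intro i
    apply exactly_one_of_abs_sub_lt (hz _) (hz _)
    rw [← cvpResidual_inr B t α z i]
    exact (abs_le_rpow_sum_rpow _ hp₀ _).trans_lt (h.trans hαδ)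
  · simp_rw [← cvpResidual_inl B t α z]
    exact (rpow_sum_inl_le _ hp₀.le).trans_lt h
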